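/- For all k_1, k_2 ≥ 1, the product of divisor-sum series satisfies the harmonic (stuffle) product formula g_{k_1} · g_{k_2} = g_{k_1,k_2} + g_{k_2,k_1} + g_{k_1+k_2} + Σ_{j=1}^{k_1} λ^j_{k_1,k_2}·g_j + Σ_{j=1}^{k_2} λ^j_{k_2,k_1}·g_j, where λ^j_{a,b} = (−1)^{b−1}·C(a+b−j−1, a−j)·B_{a+b−j}/(a+b−j)! with B_m the m-th Bernoulli number. -/

import Mathlib

open Finset PowerSeries

/-- The `q`-series `g^{(d)}_k(q) = Σ_{u,v ≥ 1} (u^d/d!)(v^{k-1}/(k-1)!) q^{uv}` as a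
formal power series: the coefficient of `q^n` is the (finite) sum over divisors. -/
noncomputable def gb (d k : ℕ) : PowerSeries ℚ :=
  PowerSeries.mk fun n =>
    ∑ u ∈ n.divisors,
      ((u : ℚ) ^ d / (Nat.factorial d : ℚ)) *
        (((n / u : ℕ) : ℚ) ^ (k - 1) / (Nat.factorial (k - 1) : ℚ))

/-- `g_k = g^{(0)}_k`. -/
noncomputable def g (k : ℕ) : PowerSeries ℚ := gb 0 k

/-- The depth-two series `g^{(d₁,d₂)}_{k₁,k₂}`. -/
noncomputable def gb2 (d1 d2 k1 k2 : ℕ) : PowerSeries ℚ :=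
  PowerSeries.mk fun n =>
    ∑ u1 ∈ Finset.range (n+1), ∑ u2 ∈ Finset.range (n+1),
    ∑ v1 ∈ Finset.range (n+1), ∑ v2 ∈ Finset.range (n+1),
      if 0 < u1 ∧ u1 < u2 ∧ 0 < v1 ∧ 0 < v2 ∧ u1 * v1 + u2 * v2 = n then
        ((u1 : ℚ) ^ d1 / (Nat.factorial d1 : ℚ)) *
        ((u2 : ℚ) ^ d2 / (Nat.factorial d2 : ℚ)) *
        ((v1 : ℚ) ^ (k1 - 1) / (Nat.factorial (k1 - 1) : ℚ)) *
        ((v2 : ℚ) ^ (k2 - 1) / (Nat.factorial (k2 - 1) : ℚ))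
      else 0

/-- `g_{k₁,k₂} = g^{(0,0)}_{k₁,k₂}`. -/
noncomputable def g2 (k1 k2 : ℕ) : PowerSeries ℚ := gb2 0 0 k1 k2

/-- The depth-three series `g^{(d₁,d₂,d₃)}_{k₁,k₂,k₃}`. -/
noncomputable def gb3 (d1 d2 d3 k1 k2 k3 : ℕ) : PowerSeries ℚ :=
  PowerSeries.mk fun n =>
    ∑ u1 ∈ Finset.range (n+1), ∑ u2 ∈ Finset.range (n+1), ∑ u3 ∈ Finset.range (n+1),
    ∑ v1 ∈ Finset.range (n+1), ∑ v2 ∈ Finset.range (n+1), ∑ v3 ∈ Finset.range (n+1),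
      if 0 < u1 ∧ u1 < u2 ∧ u2 < u3 ∧ 0 < v1 ∧ 0 < v2 ∧ 0 < v3 ∧
          u1 * v1 + u2 * v2 + u3 * v3 = n then
        ((u1 : ℚ) ^ d1 / (Nat.factorial d1 : ℚ)) *
        ((u2 : ℚ) ^ d2 / (Nat.factorial d2 : ℚ)) *
        ((u3 : ℚ) ^ d3 / (Nat.factorial d3 : ℚ)) *
        ((v1 : ℚ) ^ (k1 - 1) / (Nat.factorial (k1 - 1) : ℚ)) *
        ((v2 : ℚ) ^ (k2 - 1) / (Nat.factorial (k2 - 1) : ℚ)) *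
        ((v3 : ℚ) ^ (k3 - 1) / (Nat.factorial (k3 - 1) : ℚ))
      else 0

/-- `g_{k₁,k₂,k₃} = g^{(0,0,0)}_{k₁,k₂,k₃}`. -/
noncomputable def g3 (k1 k2 k3 : ℕ) : PowerSeries ℚ := gb3 0 0 0 k1 k2 k3

/-- The shuffle-regularized series `g^sh_{k₁,k₂}`. -/
noncomputable def gsh2 (k1 k2 : ℕ) : PowerSeries ℚ :=
  g2 k1 k2 + (if k1 = 1 then (1/2 : ℚ) else 0) • (gb 1 k2 - g k2)

/-- The shuffle-regularized series `g^sh_{k₁,k₂,k₃}`. -/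
noncomputable def gsh3 (k1 k2 k3 : ℕ) : PowerSeries ℚ :=
  g3 k1 k2 k3
    + (if k1 = 1 then (1/2 : ℚ) else 0) • (gb2 1 0 k2 k3 - g2 k2 k3)
    + (if k2 = 1 then (1/2 : ℚ) else 0) • (gb2 0 1 k1 k3 - gb2 1 0 k1 k3 - g2 k1 k3)
    + (if k1 * k2 = 1 then (1 : ℚ) else 0) •
        ((1/6 : ℚ) • gb 2 k3 - (1/4 : ℚ) • gb 1 k3 + (1/6 : ℚ) • g k3)

/-- The operator `d̂ = q·d/dq` on formal power series. -/
noncomputable def qd (f : PowerSeries ℚ) : PowerSeries ℚ :=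
  PowerSeries.mk fun n => (n : ℚ) * PowerSeries.coeff n f

/-- The coefficients `λ^j_{a,b} = (−1)^{b−1} C(a+b−j−1, a−j) B_{a+b−j}/(a+b−j)!`
(Bernoulli numbers with `B₁ = −1/2`). -/
noncomputable def lam (j a b : ℕ) : ℚ :=
  (-1 : ℚ) ^ (b - 1) * (Nat.choose (a + b - j - 1) (a - j) : ℚ) *
    bernoulli (a + b - j) / (Nat.factorial (a + b - j) : ℚ)

/-!
Writing `φ_k(v) = v^(k-1)/(k-1)!`, the product `g_{k₁} g_{k₂}` is the sum of
`φ_{k₁}(v₁) φ_{k₂}(v₂) q^(u₁v₁ + u₂v₂)` over all `u₁, u₂, v₁, v₂ ≥ 1`. The terms with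
`u₁ < u₂` give `g_{k₁,k₂}`, those with `u₁ > u₂` give `g_{k₂,k₁}`, and the diagonal
`u₁ = u₂ = u` regroups as `Σ_{u,v} c(v) q^(uv)` with the convolution
`c(v) = Σ_{0<m<v} φ_{k₁}(m) φ_{k₂}(v-m)`.

It remains to expand `c(v)` in the basis `φ_j(v)`. Expanding `(v-m)^b` binomially and summing
the powers of `m` by Faulhaber's formula expresses `c(v)` through Bernoulli numbers, with
coefficients that are alternating binomial sums, i.e. iterated forward differences of
`x ↦ C(x, c)` and of `x ↦ 1/(x+1)`. The upper end of Faulhaber's formula yields the leading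
term `φ_{k₁+k₂}(v)` and the `λ^j_{k₁,k₂}`; its lower end, written with `B'_n = (-1)^n B_n`,
yields the `λ^j_{k₂,k₁}`.
-/

open Nat

lemma sum_range_neg_one_pow_mul_choose_mul_eq_fwdDiff_iter (f : ℕ → ℚ) (a b : ℕ) :
    ∑ j ∈ range (b + 1), (-1 : ℚ) ^ j * b.choose j * f (a + j) =
      (-1) ^ b * (fwdDiff 1)^[b] f a := by
  rw [fwdDiff_iter_eq_sum_shift, mul_sum]
  refine sum_congr rfl fun j hj => ?_
  have hsign : (-1 : ℚ) ^ b * (-1) ^ (b - j) = (-1) ^ j := by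
    rw [← pow_add, show b + (b - j) = j + 2 * (b - j) by grind, pow_add, pow_mul]
    simp
  simp only [zsmul_eq_mul, smul_eq_mul, mul_one, Int.cast_mul, Int.cast_pow,
    Int.cast_neg, Int.cast_one, Int.cast_natCast]
  rw [← hsign]
  ring

lemma fwdDiff_iter_natCast_choose_apply (a b c : ℕ) :
    (fwdDiff 1)^[b] (fun x : ℕ => (x.choose c : ℚ)) a =
      if b ≤ c then (a.choose (c - b) : ℚ) else 0 := by
  induction b generalizing a with
  | zero => simp
  | succ b ih =>
    rw [Function.iterate_succ_apply', fwdDiff, ih, ih]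
    rcases lt_trichotomy (b + 1) c with h | rfl | h
    · obtain ⟨d, hd⟩ : ∃ d, c - b = d + 1 := ⟨c - b - 1, by omega⟩
      simp only [if_pos h.le, if_pos (show b ≤ c by omega), hd, Nat.choose_succ_succ',
        show c - (b + 1) = d by omega]
      push_cast
      ring
    · simp
    · simp only [if_neg (show ¬ b + 1 ≤ c by omega)]
      split_ifs <;> simp_all [show c - b = 0 by omega]

lemma fwdDiff_iter_inv_add_one (b : ℕ) :
    (fwdDiff 1)^[b] (fun x : ℕ => ((x : ℚ) + 1)⁻¹) =
      fun x : ℕ => (-1 : ℚ) ^ b * x ! * b ! / (x + b + 1)! := by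
  induction b with
  | zero =>
    ext x
    simp only [Function.iterate_zero, id_eq, pow_zero, one_mul, factorial_zero, cast_one, mul_one,
      add_zero, factorial_succ, cast_mul, cast_add]
    field_simp
  | succ b ih =>
    ext x
    rw [Function.iterate_succ_apply', ih, fwdDiff]
    simp only [show x + 1 + b + 1 = (x + b + 1) + 1 by ring,
      show x + (b + 1) + 1 = (x + b + 1) + 1 by ring, Nat.factorial_succ]
    push_cast
    field_simp
    ring

lemma sum_range_neg_one_pow_mul_choose_mul_choose (a b c : ℕ) :
    ∑ j ∈ range (b + 1), (-1 : ℚ) ^ j * b.choose j * (a + j).choose c =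
      if b ≤ c then (-1) ^ b * (a.choose (c - b) : ℚ) else 0 := by
  rw [sum_range_neg_one_pow_mul_choose_mul_eq_fwdDiff_iter (fun x => (x.choose c : ℚ)),
    fwdDiff_iter_natCast_choose_apply]
  split_ifs <;> simp

lemma sum_range_neg_one_pow_mul_choose_div (a b : ℕ) :
    ∑ j ∈ range (b + 1), (-1 : ℚ) ^ j * b.choose j / (a + j + 1) =
      a ! * b ! / (a + b + 1)! := by
  have h := sum_range_neg_one_pow_mul_choose_mul_eq_fwdDiff_iter (fun x => ((x : ℚ) + 1)⁻¹) a b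
  rw [fwdDiff_iter_inv_add_one] at h
  simp only [div_eq_mul_inv, Nat.cast_add] at h ⊢
  rw [h, ← mul_assoc, ← mul_assoc, ← mul_assoc, ← pow_add, ← two_mul, pow_mul]
  simp

lemma sum_Ioo_pow (q v : ℕ) (hv : 0 < v) :
    ∑ m ∈ Ioo 0 v, (m : ℚ) ^ q =
      (v : ℚ) ^ (q + 1) / (q + 1)
        + ∑ i ∈ range (q + 1), bernoulli (i + 1) * q.choose i / (i + 1) * (v : ℚ) ^ (q - i)
        - bernoulli' (q + 1) / (q + 1) := by
  have hrange : ∑ m ∈ range v, (m : ℚ) ^ q = 0 ^ q + ∑ m ∈ Ioo 0 v, (m : ℚ) ^ q := by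
    rw [range_eq_Ico, Ico_eq_cons_Ioo hv, sum_cons, Nat.cast_zero]
  -- `B'` and `B` differ only at index 1, and that difference absorbs the `m = 0` term `0 ^ q`.
  have hlast : bernoulli' (q + 1) = bernoulli (q + 1) + (q + 1) * 0 ^ q := by
    rcases q with _ | q
    · norm_num [bernoulli_one, bernoulli'_one]
    · simp [bernoulli_eq_bernoulli'_of_ne_one]
  have hterm : ∀ (i : ℕ) (x : ℚ), bernoulli (i + 1) * (q + 1).choose (i + 1) * x / (q + 1) =
      bernoulli (i + 1) * q.choose i / (i + 1) * x := by
    intro i x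
    have h := congrArg (Nat.cast : ℕ → ℚ) (Nat.add_one_mul_choose_eq q i)
    push_cast at h
    field_simp
    linear_combination bernoulli (i + 1) * x * h.symm
  rw [eq_sub_of_add_eq' hrange.symm, sum_range_pow, sum_range_succ', sum_range_succ, hlast]
  simp only [Nat.add_sub_add_right, hterm, bernoulli_zero, choose_zero_right, choose_self, cast_one,
    mul_one, one_mul, tsub_zero, tsub_self, pow_zero]
  field_simp
  ring

lemma pow_sub_mul_sum_Ioo_pow (q N v : ℕ) (hqN : q ≤ N) (hv : 0 < v) :
    (v : ℚ) ^ (N - q) * ∑ m ∈ Ioo 0 v, (m : ℚ) ^ q =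
      (v : ℚ) ^ (N + 1) / (q + 1)
        + ∑ i ∈ range (N + 1), bernoulli (i + 1) * q.choose i / (i + 1) * (v : ℚ) ^ (N - i)
        - bernoulli' (q + 1) / (q + 1) * (v : ℚ) ^ (N - q) := by
  rw [sum_Ioo_pow q v hv, ← sum_subset (range_subset_range.mpr (by omega : q + 1 ≤ N + 1))
    fun i _ hi => by simp [choose_eq_zero_of_lt (by simpa using hi : q < i)]]
  simp only [mul_add, mul_sub, mul_sum]
  congr 1
  congr 1
  · rw [mul_div_assoc', ← pow_add, show N - q + (q + 1) = N + 1 by omega]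
  · refine sum_congr rfl fun i hi => ?_
    rw [mul_comm, mul_assoc, ← pow_add, show q - i + (N - q) = N - i by grind]
  · ring

lemma sum_range_neg_one_pow_mul_choose_mul_sum_bernoulli (a b : ℕ) (x : ℚ) :
    ∑ j ∈ range (b + 1), (-1) ^ j * b.choose j *
        ∑ i ∈ range (a + b + 1), bernoulli (i + 1) * (a + j).choose i / (i + 1) * x ^ (a + b - i) =
      ∑ t ∈ range (a + 1),
        (-1) ^ b * a.choose t * bernoulli (b + t + 1) / (b + t + 1) * x ^ (a - t) := by
  have hcoeff : ∀ i, ∑ j ∈ range (b + 1), (-1) ^ j * b.choose j *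
      (bernoulli (i + 1) * (a + j).choose i / (i + 1) * x ^ (a + b - i)) =
      (∑ j ∈ range (b + 1), (-1 : ℚ) ^ j * b.choose j * (a + j).choose i) *
        (bernoulli (i + 1) / (i + 1) * x ^ (a + b - i)) := by
    intro i
    rw [sum_mul]
    refine sum_congr rfl fun j _ => ?_
    ring
  simp only [mul_sum]
  rw [sum_comm]
  simp only [hcoeff, sum_range_neg_one_pow_mul_choose_mul_choose]
  rw [show a + b + 1 = b + (a + 1) by ring, sum_range_add,
    sum_eq_zero fun i hi => by simp [(mem_range.mp hi).not_ge], zero_add]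
  refine sum_congr rfl fun t _ => ?_
  rw [if_pos (by omega), Nat.add_sub_cancel_left, show a + b - (b + t) = a - t by omega]
  push_cast
  ring

lemma sum_Ioo_pow_mul_sub_pow (a b v : ℕ) (hv : 0 < v) :
    ∑ m ∈ Ioo 0 v, (m : ℚ) ^ a * ((v : ℚ) - m) ^ b =
      a ! * b ! / (a + b + 1)! * (v : ℚ) ^ (a + b + 1)
        + ∑ t ∈ range (a + 1),
            (-1) ^ b * a.choose t * bernoulli (b + t + 1) / (b + t + 1) * (v : ℚ) ^ (a - t)
        - ∑ t ∈ range (b + 1),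
            (-1) ^ t * b.choose t * bernoulli' (a + t + 1) / (a + t + 1) * (v : ℚ) ^ (b - t) := by
  have hbinom : ∀ m : ℕ, (m : ℚ) ^ a * ((v : ℚ) - m) ^ b =
      ∑ j ∈ range (b + 1), (-1) ^ j * b.choose j * ((v : ℚ) ^ (b - j) * (m : ℚ) ^ (a + j)) := by
    intro m
    rw [sub_eq_neg_add, add_pow, mul_sum]
    refine sum_congr rfl fun j _ => ?_
    rw [neg_pow, pow_add]
    ring
  have hpad : ∀ j ∈ range (b + 1), (v : ℚ) ^ (b - j) * ∑ m ∈ Ioo 0 v, (m : ℚ) ^ (a + j) =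
      (v : ℚ) ^ (a + b + 1) / (a + j + 1)
        + ∑ i ∈ range (a + b + 1),
            bernoulli (i + 1) * (a + j).choose i / (i + 1) * (v : ℚ) ^ (a + b - i)
        - bernoulli' (a + j + 1) / (a + j + 1) * (v : ℚ) ^ (b - j) := by
    intro j hj
    have h := pow_sub_mul_sum_Ioo_pow (a + j) (a + b) v (by rw [mem_range] at hj; omega) hv
    rw [show a + b - (a + j) = b - j by omega] at h
    push_cast at h
    exact h
  calc ∑ m ∈ Ioo 0 v, (m : ℚ) ^ a * ((v : ℚ) - m) ^ b
      = ∑ j ∈ range (b + 1), (-1) ^ j * b.choose j *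
          ((v : ℚ) ^ (b - j) * ∑ m ∈ Ioo 0 v, (m : ℚ) ^ (a + j)) := by
        simp only [hbinom, mul_sum]
        exact sum_comm
    _ = _ := by
        rw [sum_congr rfl fun j hj => by rw [hpad j hj]]
        simp only [mul_sub, mul_add, sum_sub_distrib, sum_add_distrib]
        rw [← sum_range_neg_one_pow_mul_choose_mul_sum_bernoulli,
          ← sum_range_neg_one_pow_mul_choose_div, sum_mul]
        congr 1
        · congr 1
          exact sum_congr rfl fun j _ => by ring
        · exact sum_congr rfl fun j _ => by ring

lemma sum_Icc_lam_mul (c d : ℕ) (x : ℚ) :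
    ∑ j ∈ Icc 1 (c + 1), lam j (c + 1) (d + 1) * (x ^ (j - 1) / (j - 1)!) =
      ∑ t ∈ range (c + 1),
        (-1) ^ d * (d + t).choose t * bernoulli (d + t + 1) / (d + t + 1)! *
          (x ^ (c - t) / (c - t)!) := by
  refine sum_nbij' (fun j => c + 1 - j) (fun t => c + 1 - t) ?_ ?_ ?_ ?_ ?_
  · intro j hj; simp only [mem_Icc, mem_range] at hj ⊢; omega
  · intro t ht; simp only [mem_Icc, mem_range] at ht ⊢; omega
  · intro j hj; simp only [mem_Icc] at hj; omega
  · intro t ht; simp only [mem_range] at ht; omega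
  · intro j hj
    simp only [mem_Icc] at hj
    obtain ⟨t, rfl⟩ : ∃ t, j = c + 1 - t := ⟨c + 1 - j, by omega⟩
    rw [lam, show c + 1 - (c + 1 - t) = t by omega,
      show c + 1 + (d + 1) - (c + 1 - t) = d + t + 1 by omega, show d + t + 1 - 1 = d + t by omega,
      show d + 1 - 1 = d by omega, show c + 1 - t - 1 = c - t by omega]

lemma factorial_mul_factorial_mul_choose_div (c d t : ℕ) (ht : t ≤ c) :
    (c ! * d ! : ℚ) * ((d + t).choose t / (d + t + 1)! / (c - t)!) =
      c.choose t / (d + t + 1) := by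
  rw [Nat.cast_choose ℚ ht, Nat.cast_choose ℚ (Nat.le_add_left t d), Nat.add_sub_cancel,
    Nat.factorial_succ]
  push_cast
  field_simp

lemma sum_Ioo_pow_div_factorial_mul_pow_div_factorial (a b v : ℕ) (hv : 0 < v) :
    ∑ m ∈ Ioo 0 v, (m : ℚ) ^ a / a ! * (((v - m : ℕ) : ℚ) ^ b / b !) =
      (v : ℚ) ^ (a + b + 1) / (a + b + 1)!
        + ∑ j ∈ Icc 1 (a + 1), lam j (a + 1) (b + 1) * ((v : ℚ) ^ (j - 1) / (j - 1)!)
        + ∑ j ∈ Icc 1 (b + 1), lam j (b + 1) (a + 1) * ((v : ℚ) ^ (j - 1) / (j - 1)!) := by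
  have hfac : (a ! * b ! : ℚ) ≠ 0 := by positivity
  calc ∑ m ∈ Ioo 0 v, (m : ℚ) ^ a / a ! * (((v - m : ℕ) : ℚ) ^ b / b !)
      = (∑ m ∈ Ioo 0 v, (m : ℚ) ^ a * ((v : ℚ) - m) ^ b) / (a ! * b !) := by
        rw [sum_div]
        refine sum_congr rfl fun m hm => ?_
        rw [Nat.cast_sub (mem_Ioo.mp hm).2.le]
        field_simp
    _ = _ := by
        rw [sum_Ioo_pow_mul_sub_pow a b v hv, sum_Icc_lam_mul, sum_Icc_lam_mul, div_eq_iff hfac]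
        simp only [add_mul, sum_mul]
        rw [sub_eq_add_neg, ← sum_neg_distrib]
        congr 1
        congr 1
        · field_simp
        · refine sum_congr rfl fun t ht => ?_
          have h := factorial_mul_factorial_mul_choose_div a b t
            (Nat.lt_succ_iff.mp (mem_range.mp ht))
          linear_combination (-(-1) ^ b * bernoulli (b + t + 1) * (v : ℚ) ^ (a - t)) * h
        · refine sum_congr rfl fun t ht => ?_
          have h := factorial_mul_factorial_mul_choose_div b a t
            (Nat.lt_succ_iff.mp (mem_range.mp ht))
          have hsign : (-1 : ℚ) ^ a * (-1) ^ (a + t + 1) = -(-1) ^ t := by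
            rw [← pow_add, show a + (a + t + 1) = 2 * a + t + 1 by ring, pow_add, pow_add,
              pow_mul]
            simp
          rw [bernoulli]
          linear_combination ((-1) ^ t * bernoulli' (a + t + 1) * (v : ℚ) ^ (b - t)) * h
            - (bernoulli' (a + t + 1) * (v : ℚ) ^ (b - t) * (b ! * a ! *
              ((a + t).choose t / (a + t + 1)! / (b - t)!))) * hsign

lemma sum_eq_sum_filter_lt_add_sum_filter_gt_add_sum_filter_eq {ι α M : Type*} [LinearOrder α]
    [AddCommMonoid M] (s : Finset ι) (p q : ι → α) (F : ι → M) :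
    ∑ i ∈ s, F i = ∑ i ∈ s.filter (fun i => p i < q i), F i
      + ∑ i ∈ s.filter (fun i => q i < p i), F i + ∑ i ∈ s.filter (fun i => p i = q i), F i := by
  simp only [sum_filter, ← sum_add_distrib]
  refine sum_congr rfl fun i _ => ?_
  rcases lt_trichotomy (p i) (q i) with h | h | h
  · simp [h, h.ne, h.not_gt]
  · simp [h]
  · simp [h, h.ne', h.not_gt]

section LambertSeries

variable {R : Type*} [CommSemiring R]

/-- `Σ_{u,v ≥ 1} f v • q^(u v)`. -/
def lambertSeries : (ℕ → R) →ₗ[R] PowerSeries R where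
  toFun f := mk fun n => ∑ x ∈ n.divisorsAntidiagonal, f x.2
  map_add' f f' := by ext n; simp [sum_add_distrib]
  map_smul' c f := by ext n; simp [mul_sum]

lemma coeff_lambertSeries (f : ℕ → R) (n : ℕ) :
    coeff n (lambertSeries f) = ∑ x ∈ n.divisorsAntidiagonal, f x.2 := by
  simp [lambertSeries]

lemma lambertSeries_congr {f f' : ℕ → R} (h : ∀ v, 0 < v → f v = f' v) :
    lambertSeries f = lambertSeries f' := by
  ext n
  simp only [coeff_lambertSeries]
  exact sum_congr rfl fun x hx =>
    h _ (Nat.pos_of_ne_zero (Nat.right_ne_zero_of_mem_divisorsAntidiagonal hx))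

def pairSupport (n : ℕ) : Finset ((ℕ × ℕ) × (ℕ × ℕ)) :=
  ((range (n + 1) ×ˢ range (n + 1)) ×ˢ (range (n + 1) ×ˢ range (n + 1))).filter fun z =>
    0 < z.1.1 ∧ 0 < z.1.2 ∧ 0 < z.2.1 ∧ 0 < z.2.2 ∧ z.1.1 * z.1.2 + z.2.1 * z.2.2 = n

lemma mem_pairSupport {n : ℕ} {z : (ℕ × ℕ) × (ℕ × ℕ)} :
    z ∈ pairSupport n ↔
      0 < z.1.1 ∧ 0 < z.1.2 ∧ 0 < z.2.1 ∧ 0 < z.2.2 ∧ z.1.1 * z.1.2 + z.2.1 * z.2.2 = n := by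
  obtain ⟨⟨u₁, v₁⟩, u₂, v₂⟩ := z
  simp only [pairSupport, mem_filter, mem_product, mem_range, and_iff_right_iff_imp]
  rintro ⟨h₁, h₂, h₃, h₄, rfl⟩
  refine ⟨⟨?_, ?_⟩, ?_, ?_⟩ <;> nlinarith

/-- `Σ_{0 < u₁ < u₂, v₁, v₂ ≥ 1} f₁ v₁ f₂ v₂ • q^(u₁ v₁ + u₂ v₂)`. -/
def lambertSeries₂ (f₁ f₂ : ℕ → R) : PowerSeries R :=
  mk fun n => ∑ z ∈ (pairSupport n).filter (fun z => z.1.1 < z.2.1), f₁ z.1.2 * f₂ z.2.2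

lemma coeff_lambertSeries₂ (f₁ f₂ : ℕ → R) (n : ℕ) :
    coeff n (lambertSeries₂ f₁ f₂) =
      ∑ z ∈ (pairSupport n).filter (fun z => z.1.1 < z.2.1), f₁ z.1.2 * f₂ z.2.2 :=
  coeff_mk _ _

lemma coeff_lambertSeries_mul_lambertSeries (f₁ f₂ : ℕ → R) (n : ℕ) :
    coeff n (lambertSeries f₁ * lambertSeries f₂) =
      ∑ z ∈ pairSupport n, f₁ z.1.2 * f₂ z.2.2 := by
  simp only [coeff_mul, coeff_lambertSeries, sum_mul_sum, ← sum_product', sum_sigma']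
  refine sum_nbij' (fun σ => σ.2) (fun z => ⟨(z.1.1 * z.1.2, z.2.1 * z.2.2), z⟩) ?_ ?_ ?_ ?_ ?_
  · rintro ⟨⟨a, b⟩, ⟨u₁, v₁⟩, u₂, v₂⟩ h
    simp only [mem_sigma, HasAntidiagonal.mem_antidiagonal, mem_product,
      Nat.mem_divisorsAntidiagonal] at h
    obtain ⟨rfl, ⟨rfl, ha⟩, rfl, hb⟩ := h
    simp only [ne_eq, mul_eq_zero, not_or] at ha hb
    exact mem_pairSupport.mpr ⟨Nat.pos_of_ne_zero ha.1, Nat.pos_of_ne_zero ha.2,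
      Nat.pos_of_ne_zero hb.1, Nat.pos_of_ne_zero hb.2, rfl⟩
  · rintro ⟨⟨u₁, v₁⟩, u₂, v₂⟩ h
    simp only [mem_pairSupport] at h
    obtain ⟨h₁, h₂, h₃, h₄, rfl⟩ := h
    simp only [mem_sigma, HasAntidiagonal.mem_antidiagonal, mem_product,
      Nat.mem_divisorsAntidiagonal, true_and]
    exact ⟨by positivity, by positivity⟩
  · rintro ⟨⟨a, b⟩, ⟨u₁, v₁⟩, u₂, v₂⟩ h
    simp only [mem_sigma, HasAntidiagonal.mem_antidiagonal, mem_product,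
      Nat.mem_divisorsAntidiagonal] at h
    obtain ⟨rfl, ⟨rfl, -⟩, rfl, -⟩ := h
    rfl
  · intros; rfl
  · intros; rfl

lemma sum_filter_gt_pairSupport (f₁ f₂ : ℕ → R) (n : ℕ) :
    ∑ z ∈ (pairSupport n).filter (fun z => z.2.1 < z.1.1), f₁ z.1.2 * f₂ z.2.2 =
      ∑ z ∈ (pairSupport n).filter (fun z => z.1.1 < z.2.1), f₂ z.1.2 * f₁ z.2.2 := by
  refine sum_nbij' Prod.swap Prod.swap ?_ ?_ (fun _ _ => rfl) (fun _ _ => rfl)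
    fun _ _ => mul_comm _ _
  all_goals
    rintro ⟨⟨u₁, v₁⟩, u₂, v₂⟩ h
    simp only [mem_filter, mem_pairSupport, Prod.fst_swap, Prod.snd_swap] at h ⊢
    obtain ⟨⟨h₁, h₂, h₃, h₄, h₅⟩, hlt⟩ := h
    exact ⟨⟨h₃, h₄, h₁, h₂, by rw [add_comm, h₅]⟩, hlt⟩

lemma sum_filter_eq_pairSupport (f₁ f₂ : ℕ → R) (n : ℕ) :
    ∑ z ∈ (pairSupport n).filter (fun z => z.1.1 = z.2.1), f₁ z.1.2 * f₂ z.2.2 =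
      ∑ x ∈ n.divisorsAntidiagonal, ∑ m ∈ Ioo 0 x.2, f₁ m * f₂ (x.2 - m) := by
  rw [sum_sigma']
  refine sum_nbij' (fun z => ⟨(z.1.1, z.1.2 + z.2.2), z.1.2⟩)
    (fun σ => ((σ.1.1, σ.2), (σ.1.1, σ.1.2 - σ.2))) ?_ ?_ ?_ ?_ ?_
  · rintro ⟨⟨u₁, v₁⟩, u₂, v₂⟩ h
    simp only [mem_filter, mem_pairSupport] at h
    obtain ⟨⟨h₁, h₂, h₃, h₄, rfl⟩, rfl⟩ := h
    simp only [mem_sigma, Nat.mem_divisorsAntidiagonal, mem_Ioo]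
    exact ⟨⟨by ring, by positivity⟩, h₂, by omega⟩
  · rintro ⟨⟨u, v⟩, m⟩ h
    simp only [mem_sigma, Nat.mem_divisorsAntidiagonal, mem_Ioo] at h
    obtain ⟨⟨rfl, huv⟩, hm, hmv⟩ := h
    have hu : 0 < u := Nat.pos_of_ne_zero (left_ne_zero_of_mul huv)
    simp only [mem_filter, mem_pairSupport, and_true]
    exact ⟨hu, hm, hu, by omega, by rw [← mul_add, Nat.add_sub_cancel' hmv.le]⟩
  · rintro ⟨⟨u₁, v₁⟩, u₂, v₂⟩ h
    simp only [mem_filter] at h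
    simp [h.2]
  · rintro ⟨⟨u, v⟩, m⟩ h
    simp only [mem_sigma, mem_Ioo] at h
    simp [Nat.add_sub_cancel' h.2.2.le]
  · intros
    simp

theorem lambertSeries_mul_lambertSeries (f₁ f₂ : ℕ → R) :
    lambertSeries f₁ * lambertSeries f₂ =
      lambertSeries₂ f₁ f₂ + lambertSeries₂ f₂ f₁
        + lambertSeries (fun v => ∑ m ∈ Ioo 0 v, f₁ m * f₂ (v - m)) := by
  ext n
  rw [coeff_lambertSeries_mul_lambertSeries,
    sum_eq_sum_filter_lt_add_sum_filter_gt_add_sum_filter_eq _ (fun z => z.1.1) (fun z => z.2.1),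
    sum_filter_gt_pairSupport, sum_filter_eq_pairSupport, map_add, map_add, coeff_lambertSeries,
    coeff_lambertSeries₂, coeff_lambertSeries₂]

end LambertSeries

lemma g_eq_lambertSeries (k : ℕ) :
    g k = lambertSeries fun v => (v : ℚ) ^ (k - 1) / (k - 1)! := by
  ext n
  rw [coeff_lambertSeries, Nat.sum_divisorsAntidiagonal (fun _ v => (v : ℚ) ^ (k - 1) / (k - 1)!)]
  simp [g, gb]

lemma g2_eq_lambertSeries₂ (k₁ k₂ : ℕ) :
    g2 k₁ k₂ = lambertSeries₂ (fun v => (v : ℚ) ^ (k₁ - 1) / (k₁ - 1)!)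
      (fun v => (v : ℚ) ^ (k₂ - 1) / (k₂ - 1)!) := by
  ext n
  simp only [g2, gb2, coeff_mk, coeff_lambertSeries₂, pairSupport, filter_filter, sum_filter,
    sum_product, pow_zero, factorial_zero, cast_one, div_one, one_mul]
  refine sum_congr rfl fun u₁ _ => ?_
  rw [sum_comm]
  refine sum_congr rfl fun v₁ _ => sum_congr rfl fun u₂ _ => sum_congr rfl fun v₂ _ => ?_
  refine if_congr ?_ rfl rfl
  constructor
  · rintro ⟨h₁, h₂, h₃, h₄, h₅⟩
    exact ⟨⟨h₁, h₃, h₁.trans h₂, h₄, h₅⟩, h₂⟩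
  · rintro ⟨⟨h₁, h₃, -, h₄, h₅⟩, h₂⟩
    exact ⟨h₁, h₂, h₃, h₄, h₅⟩

/-- The harmonic (stuffle) product formula for `g_{k₁}·g_{k₂}`. -/
theorem stmt_4 (k1 k2 : ℕ) (h1 : 1 ≤ k1) (h2 : 1 ≤ k2) :
    g k1 * g k2 =
      g2 k1 k2 + g2 k2 k1 + g (k1 + k2)
        + ∑ j ∈ Finset.Icc 1 k1, lam j k1 k2 • g j
        + ∑ j ∈ Finset.Icc 1 k2, lam j k2 k1 • g j := by
  obtain ⟨a, rfl⟩ : ∃ a, k1 = a + 1 := ⟨k1 - 1, by omega⟩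
  obtain ⟨b, rfl⟩ : ∃ b, k2 = b + 1 := ⟨k2 - 1, by omega⟩
  simp only [g_eq_lambertSeries, g2_eq_lambertSeries₂, lambertSeries_mul_lambertSeries,
    ← map_smul, ← map_sum, add_assoc, ← map_add]
  congr 2
  refine lambertSeries_congr fun v hv => ?_
  simp only [Nat.add_sub_cancel, sum_Ioo_pow_div_factorial_mul_pow_div_factorial a b v hv,
    Pi.add_apply, Finset.sum_apply, Pi.smul_apply, smul_eq_mul,
    show a + (1 + (b + 1)) - 1 = a + b + 1 by omega, add_assoc]
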